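/- Let ε ∈ K satisfy ε^2 - ε + 1 = 0. Then the projectivity induced by the matrix N = [[0, 2ε-2, 2ε-4, 0],[0, -4ε+2, 0, 0],[2ε-4, 2ε-2, 0, 0],[-3, -3ε, -3ε, 4ε-2]] stabilises the quartic surface Q' = 0, where Q' = x^3y + 2x^2y^2 + xy^3 + (3/2)x^3z + 6x^2yz + (9/2)xy^2z + (1/2)y^3z + (9/2)x^2z^2 + 6xyz^2 + y^2z^2 + 3xz^3 + (1/2)yz^3 - x^2yt - xy^2t - 3x^2zt - 4xyzt - y^2zt - 3xz^2t - yz^2t. -/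

import Mathlib

/-!
The matrix `N` rescales the quartic: `Q' (N u) = -144 Q' u`, a polynomial identity modulo
`ε² - ε + 1`. Since `det N = ((4ε - 2)(2ε - 4))² = 144 (ε - 1)` is nonzero under the same
relation, `N⁻¹` rescales `Q'` by `-1/144`.
-/

/-- The quartic monoid `Q'` (the surface `Q(ε)` for `ε² - ε + 1 = 0`) as a
function of the homogeneous coordinates `(x, y, z, t) = (v 0, v 1, v 2, v 3)`. -/
def Q' {K : Type*} [Field K] (v : Fin 4 → K) : K :=
  (v 0)^3*(v 1) + 2*(v 0)^2*(v 1)^2 + (v 0)*(v 1)^3 + (3/2)*(v 0)^3*(v 2)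
    + 6*(v 0)^2*(v 1)*(v 2) + (9/2)*(v 0)*(v 1)^2*(v 2) + (1/2)*(v 1)^3*(v 2)
    + (9/2)*(v 0)^2*(v 2)^2 + 6*(v 0)*(v 1)*(v 2)^2 + (v 1)^2*(v 2)^2
    + 3*(v 0)*(v 2)^3 + (1/2)*(v 1)*(v 2)^3
    - (v 0)^2*(v 1)*(v 3) - (v 0)*(v 1)^2*(v 3) - 3*(v 0)^2*(v 2)*(v 3)
    - 4*(v 0)*(v 1)*(v 2)*(v 3) - (v 1)^2*(v 2)*(v 3) - 3*(v 0)*(v 2)^2*(v 3)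
    - (v 1)*(v 2)^2*(v 3)

open Matrix

theorem apply_eq_mul_apply_inv_mulVec {R : Type*} [CommRing R] {n : Type*} [Fintype n]
    [DecidableEq n] {A : Matrix n n R} (hA : IsUnit A.det) {Q : (n → R) → R} {c : R}
    (hQ : ∀ u, Q (A *ᵥ u) = c * Q u) (v : n → R) :
    Q v = c * Q (A⁻¹ *ᵥ v) := by
  rw [← hQ, mulVec_mulVec, mul_nonsing_inv A hA, one_mulVec]

def projectivityMatrix {K : Type*} [Field K] (ε : K) : Matrix (Fin 4) (Fin 4) K :=
  !![0, 2*ε - 2, 2*ε - 4, 0;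
     0, -4*ε + 2, 0, 0;
     2*ε - 4, 2*ε - 2, 0, 0;
     -3, -3*ε, -3*ε, 4*ε - 2]

section projectivityMatrix

variable {K : Type*} [Field K] (ε : K)

theorem projectivityMatrix_mulVec (u : Fin 4 → K) :
    projectivityMatrix ε *ᵥ u =
      ![(2*ε - 2) * u 1 + (2*ε - 4) * u 2,
        (-4*ε + 2) * u 1,
        (2*ε - 4) * u 0 + (2*ε - 2) * u 1,
        -3 * u 0 - 3*ε * u 1 - 3*ε * u 2 + (4*ε - 2) * u 3] := by
  ext i
  fin_cases i <;>
    simp only [projectivityMatrix, mulVec, dotProduct, Fin.sum_univ_four, of_apply, cons_val',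
      cons_val, cons_val_fin_one, Fin.zero_eta, Fin.mk_one, Fin.reduceFinMk] <;>
    ring

theorem det_projectivityMatrix :
    (projectivityMatrix ε).det = ((4*ε - 2) * (2*ε - 4))^2 := by
  rw [det_succ_column _ 3, Fin.sum_univ_four]
  simp only [projectivityMatrix, det_fin_three, submatrix_apply, of_apply, cons_val, Fin.succAbove,
    Fin.coe_ofNat_eq_mod, Fin.reduceLT, Fin.reduceCastSucc, ↓reduceIte]
  ring

variable {ε} (hε : ε^2 - ε + 1 = 0)
include hε

theorem det_projectivityMatrix_of_sq_sub_add_one_eq_zero :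
    (projectivityMatrix ε).det = 144 * (ε - 1) := by
  rw [det_projectivityMatrix]
  linear_combination (64*ε^2 - 256*ε + 208) * hε

theorem Q'_projectivityMatrix_mulVec [CharZero K] (u : Fin 4 → K) :
    Q' (projectivityMatrix ε *ᵥ u) = -144 * Q' u := by
  rw [projectivityMatrix_mulVec]
  simp only [Q', cons_val_zero, cons_val_one, cons_val_two, cons_val_three, head_cons, tail_cons]
  grind

end projectivityMatrix

/-- if `ε ∈ K` satisfies `ε² - ε + 1 = 0`, the projectivity
induced by the matrix `N` stabilises the surface `Q' = 0`: `Q'` composed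
with `N⁻¹` is a nonzero scalar multiple of `Q'`. -/
theorem stmt17 {K : Type*} [Field K] [CharZero K] (ε : K)
    (hε : ε^2 - ε + 1 = 0) :
    ∃ lam : K, lam ≠ 0 ∧
      ∀ v : Fin 4 → K,
        Q' ((!![0, 2*ε - 2, 2*ε - 4, 0;
                0, -4*ε + 2, 0, 0;
                2*ε - 4, 2*ε - 2, 0, 0;
                -3, -3*ε, -3*ε, 4*ε - 2] : Matrix (Fin 4) (Fin 4) K)⁻¹.mulVec v)
          = lam * Q' v := by
  change ∃ lam : K, lam ≠ 0 ∧ ∀ v, Q' ((projectivityMatrix ε)⁻¹ *ᵥ v) = lam * Q' v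
  have hε1 : ε ≠ 1 := by
    rintro rfl
    norm_num at hε
  have hdet : IsUnit (projectivityMatrix ε).det := by
    rw [det_projectivityMatrix_of_sq_sub_add_one_eq_zero hε, isUnit_iff_ne_zero]
    exact mul_ne_zero (by norm_num) (sub_ne_zero.mpr hε1)
  refine ⟨(-144)⁻¹, by norm_num, fun v => ?_⟩
  rw [apply_eq_mul_apply_inv_mulVec hdet (Q'_projectivityMatrix_mulVec hε) v,
    inv_mul_cancel_left₀ (by norm_num)]
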